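/- Let X = ℤ/3ℤ with x▷̲y = x▷̄y = x+2, R = ℤ/3ℤ, δ = 2, and bracket coefficients given by the matrices A = [[1,1,2],[2,1,2],[1,1,1]], B = [[2,2,1],[1,2,1],[2,2,2]], V ≡ 0, C = A, D = B, U ≡ 0 (indexed so A_{i,j} is the (i,j) entry for i,j ∈ {0,1,2}). Then these data satisfy the biquandle virtual bracket axioms; in particular, since U ≡ V ≡ 0, axioms (ii.i)–(ii.ii) reduce to A_{x,y}C_{x,y} = 1 and B_{x,y}D_{x,y} = 1, which hold since every entry of A and B is a unit of ℤ/3ℤ and C = A, D = B satisfy A_{x,y}² = B_{x,y}² = 1. -/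

import Mathlib

/-- A biquandle: a set with two operations satisfying the biquandle axioms. -/
structure Biquandle (X : Type*) where
  und : X → X → X
  ovr : X → X → X
  diag : ∀ x, und x x = ovr x x
  alpha_bij : ∀ x, Function.Bijective (fun y => ovr y x)
  beta_bij : ∀ x, Function.Bijective (fun y => und y x)
  S_bij : Function.Bijective (fun p : X × X => (ovr p.2 p.1, und p.1 p.2))
  exch1 : ∀ x y z, und (und x y) (und z y) = und (und x z) (ovr y z)
  exch2 : ∀ x y z, ovr (und x y) (und z y) = und (ovr x z) (ovr y z)
  exch3 : ∀ x y z, ovr (ovr x y) (ovr z y) = ovr (ovr x z) (und y z)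

/-- The biquandle virtual bracket axioms (i.i)-(i.ii), (ii.i)-(ii.vi),
(iii.i)-(iii.xv) for operations `und`/`ovr` on `X`, coefficients
`A,B,C,D,U,V : X → X → R`, `δ ∈ R` and `w ∈ Rˣ`. -/
def IsVirtualBracket {X R : Type*} [CommRing R]
    (und ovr : X → X → X)
    (A B C D U V : X → X → R) (δ : R) (w : Rˣ) : Prop :=
  -- (i.i), (i.ii)
  (∀ x, (w : R) = δ * A x x + B x x + V x x) ∧
  (∀ x, ((w⁻¹ : Rˣ) : R) = δ * C x x + D x x + U x x) ∧
  -- (ii.i)-(ii.vi)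
  (∀ x y, (1 : R) = A x y * C x y + V x y * U x y) ∧
  (∀ x y, (1 : R) = B x y * D x y + V x y * U x y) ∧
  (∀ x y, (0 : R) = A x y * U x y + V x y * C x y) ∧
  (∀ x y, (0 : R) = B x y * U x y + V x y * D x y) ∧
  (∀ x y, (0 : R) = δ * B x y * D x y + A x y * D x y + B x y * C x y) ∧
  (∀ x y, (0 : R) = δ * A x y * C x y + A x y * D x y + B x y * C x y) ∧
  -- (iii.i)
  (∀ x y z, A x y * A (und x y) (ovr z y) * A y z + V x y * A (und x y) (ovr z y) * V y z
    = A (ovr y x) (ovr z x) * A x z * A (und x z) (und y z)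
      + V (ovr y x) (ovr z x) * A x z * V (und x z) (und y z)) ∧
  -- (iii.ii)
  (∀ x y z, A x y * A (und x y) (ovr z y) * B y z + B x y * A (und x y) (ovr z y) * A y z
      + δ * B x y * A (und x y) (ovr z y) * B y z + B x y * A (und x y) (ovr z y) * V y z
      + B x y * B (und x y) (ovr z y) * B y z + B x y * V (und x y) (ovr z y) * B y z
      + V x y * A (und x y) (ovr z y) * B y z
    = A (ovr y x) (ovr z x) * B x z * A (und x z) (und y z)) ∧
  -- (iii.iii)
  (∀ x y z, A x y * B (und x y) (ovr z y) * A y z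
    = A (ovr y x) (ovr z x) * A x z * B (und x z) (und y z)
      + B (ovr y x) (ovr z x) * A x z * A (und x z) (und y z)
      + δ * B (ovr y x) (ovr z x) * A x z * B (und x z) (und y z)
      + B (ovr y x) (ovr z x) * A x z * V (und x z) (und y z)
      + B (ovr y x) (ovr z x) * B x z * B (und x z) (und y z)
      + B (ovr y x) (ovr z x) * V x z * B (und x z) (und y z)
      + V (ovr y x) (ovr z x) * A x z * B (und x z) (und y z)) ∧
  -- (iii.iv)
  (∀ x y z, A x y * V (und x y) (ovr z y) * A y z
    = A (ovr y x) (ovr z x) * A x z * V (und x z) (und y z)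
      + V (ovr y x) (ovr z x) * A x z * A (und x z) (und y z)) ∧
  -- (iii.v)
  (∀ x y z, A x y * A (und x y) (ovr z y) * V y z + V x y * A (und x y) (ovr z y) * A y z
    = A (ovr y x) (ovr z x) * V x z * A (und x z) (und y z)) ∧
  -- (iii.vi)
  (∀ x y z, B x y * B (und x y) (ovr z y) * A y z + B x y * V (und x y) (ovr z y) * V y z
    = A (ovr y x) (ovr z x) * B x z * B (und x z) (und y z)
      + V (ovr y x) (ovr z x) * V x z * B (und x z) (und y z)) ∧
  -- (iii.vii)
  (∀ x y z, A x y * B (und x y) (ovr z y) * B y z + V x y * V (und x y) (ovr z y) * B y z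
    = B (ovr y x) (ovr z x) * B x z * A (und x z) (und y z)
      + B (ovr y x) (ovr z x) * V x z * V (und x z) (und y z)) ∧
  -- (iii.viii)
  (∀ x y z, B x y * B (und x y) (ovr z y) * V y z + B x y * V (und x y) (ovr z y) * A y z
    = A (ovr y x) (ovr z x) * B x z * V (und x z) (und y z)) ∧
  -- (iii.ix)
  (∀ x y z, A x y * B (und x y) (ovr z y) * V y z
    = B (ovr y x) (ovr z x) * B x z * V (und x z) (und y z)
      + B (ovr y x) (ovr z x) * V x z * A (und x z) (und y z)) ∧
  -- (iii.x)
  (∀ x y z, V x y * B (und x y) (ovr z y) * A y z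
    = A (ovr y x) (ovr z x) * V x z * B (und x z) (und y z)
      + V (ovr y x) (ovr z x) * B x z * B (und x z) (und y z)) ∧
  -- (iii.xi)
  (∀ x y z, A x y * V (und x y) (ovr z y) * B y z + V x y * B (und x y) (ovr z y) * B y z
    = V (ovr y x) (ovr z x) * B x z * A (und x z) (und y z)) ∧
  -- (iii.xii)
  (∀ x y z, V x y * V (und x y) (ovr z y) * A y z
    = A (ovr y x) (ovr z x) * V x z * V (und x z) (und y z)) ∧
  -- (iii.xiii)
  (∀ x y z, A x y * V (und x y) (ovr z y) * V y z
    = V (ovr y x) (ovr z x) * V x z * A (und x z) (und y z)) ∧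
  -- (iii.xiv)
  (∀ x y z, V x y * B (und x y) (ovr z y) * V y z
    = V (ovr y x) (ovr z x) * B x z * V (und x z) (und y z)) ∧
  -- (iii.xv)
  (∀ x y z, V x y * V (und x y) (ovr z y) * V y z
    = V (ovr y x) (ovr z x) * V x z * V (und x z) (und y z))

/-!
Here `B = -A` and `A` takes values in `{±1}`, so `A⁻¹ = A`. For a bracket of the form
`(A, B, C, D) = (A, -A, A⁻¹, -A⁻¹)` with `U = V = 0` and `δ = 2`, every term of each
Reidemeister III axiom is `±` one of the two triple products of `A` in (iii.i), so all
fifteen axioms reduce to (iii.i) itself, and (i.i)–(ii.vi) reduce to `A x x = w`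
and `A x y * C x y = 1`.
For the given `A`, (iii.i) with `x ▷ y = x + 2` is a finite check over `(ℤ/3ℤ)³`.
-/

theorem isVirtualBracket_of_cocycle {X R : Type*} [CommRing R] (und ovr : X → X → X)
    (A C : X → X → R) (w : Rˣ) (hAC : ∀ x y, A x y * C x y = 1) (hdiag : ∀ x, A x x = w)
    (hcocycle : ∀ x y z, A x y * A (und x y) (ovr z y) * A y z
      = A (ovr y x) (ovr z x) * A x z * A (und x z) (und y z)) :
    IsVirtualBracket und ovr A (-A) C (-C) 0 0 2 w := by
  have hCdiag (x : X) : C x x = ↑w⁻¹ :=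
    (Units.inv_eq_of_mul_eq_one_right (hdiag x ▸ hAC x x)).symm
  simp only [IsVirtualBracket, Pi.neg_apply, Pi.zero_apply, mul_zero, zero_mul, add_zero,
    implies_true, and_true, true_and]
  refine ⟨fun x => ?_, fun x => ?_, fun x y => (hAC x y).symm, fun x y => ?_, fun x y => ?_,
    fun x y => ?_, hcocycle, fun x y z => ?_, fun x y z => ?_, fun x y z => ?_, fun x y z => ?_⟩
  · linear_combination -hdiag x
  · linear_combination -hCdiag x
  · linear_combination -hAC x y
  · ring
  · ring
  · linear_combination -hcocycle x y z
  · linear_combination -hcocycle x y z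
  · linear_combination hcocycle x y z
  · linear_combination hcocycle x y z

/-- Over `X = ℤ/3ℤ` (with `x ▷̲ y = x ▷̄ y = x + 2`) and `R = ℤ/3ℤ`, `δ = 2`,
with coefficient matrices `A = [[1,1,2],[2,1,2],[1,1,1]]`,
`B = [[2,2,1],[1,2,1],[2,2,2]]`, `V ≡ 0`, `C = A`, `D = B`, `U ≡ 0` and `w`
determined by axiom (i.i) (namely `w = 1`), the biquandle virtual bracket
axioms hold; moreover, since `U ≡ V ≡ 0`, axioms (ii.i)-(ii.ii) reduce to
`A_{x,y}·C_{x,y} = 1` and `B_{x,y}·D_{x,y} = 1`, i.e. `A_{x,y}² = B_{x,y}² = 1`. -/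
theorem zmod3_classical_bracket
    (A B : ZMod 3 → ZMod 3 → ZMod 3)
    (hA : ∀ x y, A x y =
      if x = 0 then (if y = 2 then 2 else 1)
      else if x = 1 then (if y = 1 then 1 else 2) else 1)
    (hB : ∀ x y, B x y =
      if x = 0 then (if y = 2 then 1 else 2)
      else if x = 1 then (if y = 1 then 2 else 1) else 2) :
    IsVirtualBracket (X := ZMod 3) (R := ZMod 3)
      (fun x _ => x + 2) (fun x _ => x + 2)
      A B A B (fun _ _ => 0) (fun _ _ => 0) 2 1 ∧
    (∀ x y : ZMod 3, A x y * A x y = 1 ∧ B x y * B x y = 1) := by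
  have hB_neg : B = -A := by
    funext x y
    rw [Pi.neg_apply, Pi.neg_apply, hA, hB]
    revert x y
    decide
  have hA_sq (x y : ZMod 3) : A x y * A x y = 1 := by
    rw [hA]
    revert x y
    decide
  have hA_diag (x : ZMod 3) : A x x = ((1 : (ZMod 3)ˣ) : ZMod 3) := by
    rw [hA]
    revert x
    decide
  have hA_cocycle (x y z : ZMod 3) :
      A x y * A (x + 2) (z + 2) * A y z = A (y + 2) (z + 2) * A x z * A (x + 2) (y + 2) := by
    simp only [hA]
    revert x y z
    decide
  subst hB_neg
  refine ⟨?_, fun x y => ⟨hA_sq x y, by simpa only [Pi.neg_apply, neg_mul_neg] using hA_sq x y⟩⟩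
  exact isVirtualBracket_of_cocycle (fun x _ => x + 2) (fun x _ => x + 2) A A 1
    hA_sq hA_diag hA_cocycle
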